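/- Under the spherical gradient flow with simple smallest eigenvalue λ₁ < λ₂ and h₁(0) ≠ 0, for every ε ∈ (0,1), if |h₁(t)| ≥ ε then t ≥ (1/(4(λ_k - λ₁))) log((h₂(0)² + ⋯ + h_k(0)²)/(h₁(0)²(ε^{-2}-1))) for any k with λ_k > λ₁, and if |h₁(t)| ≤ ε then t ≤ (1/(4(λ₂-λ₁))) log((h₁(0)^{-2}-1)/(ε^{-2}-1)). -/

import Mathlib

/-!
With `z = h₁(0)` and `S(t) = Σ_{i ≥ 2} h_i(0)² e^{-4(λ_i - λ₁)t}` we have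
`|h₁(t)| = |z| / √(z² + S(t))`, and at `t = 0` this forces `z² + S(0) = 1`.
The condition `ε ≤ |h₁(t)|` is equivalent to `S(t) ≤ z² (ε⁻² - 1)`, and `|h₁(t)| ≤ ε` to the
reverse inequality. Every rate `λ_i - λ₁` with `2 ≤ i ≤ k` is at most `λ_k - λ₁`, and every
rate with `i ≥ 2` is at least `λ₂ - λ₁`, so `S(t)` lies between
`(h₂(0)² + ⋯ + h_k(0)²) e^{-4(λ_k - λ₁)t}` and `(1 - z²) e^{-4(λ₂ - λ₁)t}`.
Taking logarithms gives the two bounds on `t`.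
-/

open Real

theorem eq_one_of_abs_eq_abs_div_sqrt {a x : ℝ} (ha : a ≠ 0) (h : |a| = |a| / √x) : x = 1 := by
  rwa [eq_comm, div_eq_mul_inv, mul_eq_left₀ (abs_ne_zero.2 ha), inv_eq_one, sqrt_eq_one] at h

theorem le_abs_div_sqrt_iff {a s ε : ℝ} (ha : a ≠ 0) (hs : 0 ≤ s) (hε : 0 < ε) :
    ε ≤ |a| / √(a ^ 2 + s) ↔ s ≤ a ^ 2 * ((ε ^ 2)⁻¹ - 1) := by
  have hD : 0 < a ^ 2 + s := by positivity
  rw [le_div_iff₀ (sqrt_pos.2 hD), ← sq_le_sq₀ (by positivity) (abs_nonneg a), mul_pow,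
    sq_sqrt hD.le, sq_abs, mul_sub, mul_one, ← div_eq_mul_inv, le_sub_iff_add_le,
    le_div_iff₀ (by positivity)]
  constructor <;> intro <;> linarith

theorem abs_div_sqrt_le_iff {a s ε : ℝ} (ha : a ≠ 0) (hs : 0 ≤ s) (hε : 0 < ε) :
    |a| / √(a ^ 2 + s) ≤ ε ↔ a ^ 2 * ((ε ^ 2)⁻¹ - 1) ≤ s := by
  have hD : 0 < a ^ 2 + s := by positivity
  rw [div_le_iff₀ (sqrt_pos.2 hD), ← sq_le_sq₀ (abs_nonneg a) (by positivity), mul_pow,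
    sq_sqrt hD.le, sq_abs, mul_sub, mul_one, ← div_eq_mul_inv, sub_le_iff_le_add,
    div_le_iff₀ (by positivity)]
  constructor <;> intro <;> linarith

section ExpSum

variable {ι : Type*} (s : Finset ι) {w μ : ι → ℝ} {m t : ℝ}

theorem sum_mul_exp_le_sum_mul_exp_of_le (hw : ∀ i ∈ s, 0 ≤ w i)
    (hμ : ∀ i ∈ s, μ i ≤ m) (ht : 0 ≤ t) :
    ∑ i ∈ s, w i * exp (μ i * t) ≤ (∑ i ∈ s, w i) * exp (m * t) := by
  rw [Finset.sum_mul]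
  gcongr with i hi
  exacts [hw i hi, hμ i hi]

theorem sum_mul_exp_le_sum_mul_exp_of_ge (hw : ∀ i ∈ s, 0 ≤ w i)
    (hμ : ∀ i ∈ s, m ≤ μ i) (ht : 0 ≤ t) :
    (∑ i ∈ s, w i) * exp (m * t) ≤ ∑ i ∈ s, w i * exp (μ i * t) := by
  rw [Finset.sum_mul]
  gcongr with i hi
  exacts [hw i hi, hμ i hi]

end ExpSum

theorem one_div_mul_log_div_le {A B c t : ℝ} (hc : 0 < c) (ht : 0 ≤ t) (hA : 0 ≤ A)
    (hB : 0 < B) (h : A * exp (-c * t) ≤ B) : 1 / c * log (A / B) ≤ t := by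
  rcases hA.eq_or_lt with rfl | hA
  · simpa using ht -- `log 0 = 0`
  have hlog := log_le_log (by positivity) h
  rw [log_mul hA.ne' (exp_ne_zero _), log_exp] at hlog
  rw [log_div hA.ne' hB.ne', one_div_mul_eq_div, div_le_iff₀ hc]
  linarith

theorem le_one_div_mul_log_div {A B c t : ℝ} (hc : 0 < c) (hB : 0 < B)
    (h : B ≤ A * exp (-c * t)) : t ≤ 1 / c * log (A / B) := by
  have hA : 0 < A := pos_of_mul_pos_left (hB.trans_le h) (exp_pos _).le
  have hlog := log_le_log hB h
  rw [log_mul hA.ne' (exp_ne_zero _), log_exp] at hlog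
  rw [log_div hA.ne' hB.ne', one_div_mul_eq_div, le_div_iff₀ hc]
  linarith

theorem hitting_time_bounds {N : ℕ} (hN : 2 ≤ N)
    (lam : Fin N → ℝ) (hlam : Monotone lam)
    (hgap : lam ⟨0, by omega⟩ < lam ⟨1, by omega⟩)
    (h : Fin N → ℝ → ℝ)
    (hform : ∀ t : ℝ, 0 ≤ t →
      |h ⟨0, by omega⟩ t| = |h ⟨0, by omega⟩ 0| /
        Real.sqrt ((h ⟨0, by omega⟩ 0) ^ 2 +
          ∑ i ∈ Finset.Ioi (⟨0, by omega⟩ : Fin N),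
            (h i 0) ^ 2 * Real.exp (-4 * (lam i - lam ⟨0, by omega⟩) * t)))
    (hh0 : h ⟨0, by omega⟩ 0 ≠ 0)
    (ε : ℝ) (hε : ε ∈ Set.Ioo (0:ℝ) 1)
    (t : ℝ) (ht : 0 ≤ t) :
    (∀ k : Fin N, lam ⟨0, by omega⟩ < lam k → ε ≤ |h ⟨0, by omega⟩ t| →
      (1 / (4 * (lam k - lam ⟨0, by omega⟩))) *
          Real.log ((∑ i ∈ Finset.Icc (⟨1, by omega⟩ : Fin N) k, (h i 0) ^ 2) /
            ((h ⟨0, by omega⟩ 0) ^ 2 * ((ε ^ 2)⁻¹ - 1))) ≤ t) ∧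
    (|h ⟨0, by omega⟩ t| ≤ ε →
      t ≤ (1 / (4 * (lam ⟨1, by omega⟩ - lam ⟨0, by omega⟩))) *
        Real.log ((((h ⟨0, by omega⟩ 0) ^ 2)⁻¹ - 1) / ((ε ^ 2)⁻¹ - 1))) := by
  obtain ⟨hε0, hε1⟩ := hε
  set i₀ : Fin N := ⟨0, by omega⟩
  set i₁ : Fin N := ⟨1, by omega⟩
  set z := h i₀ 0
  have hlt_iff_le (i : Fin N) : i₀ < i ↔ i₁ ≤ i := by
    simp only [i₀, i₁, Fin.lt_def, Fin.le_def]; omega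
  have hS (s : ℝ) : 0 ≤ ∑ i ∈ Finset.Ioi i₀, h i 0 ^ 2 * exp (-4 * (lam i - lam i₀) * s) :=
    Finset.sum_nonneg fun i _ => by positivity
  have hmass : ∑ i ∈ Finset.Ioi i₀, h i 0 ^ 2 = 1 - z ^ 2 := by
    have h0 := eq_one_of_abs_eq_abs_div_sqrt hh0 (hform 0 le_rfl)
    simp only [mul_zero, exp_zero, mul_one] at h0
    linarith
  have hB : 0 < z ^ 2 * ((ε ^ 2)⁻¹ - 1) := by
    have : 1 < (ε ^ 2)⁻¹ := one_lt_inv₀ (by positivity) |>.2 (by nlinarith)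
    have : 0 < z ^ 2 := by positivity
    nlinarith
  refine ⟨fun k hk hεt => ?_, fun htε => ?_⟩
  · have hSt := (le_abs_div_sqrt_iff hh0 (hS t) hε0).1 (hform t ht ▸ hεt)
    have hlow := sum_mul_exp_le_sum_mul_exp_of_ge (Finset.Icc i₁ k)
      (μ := fun i => -4 * (lam i - lam i₀)) (m := -4 * (lam k - lam i₀))
      (fun i _ => sq_nonneg (h i 0)) (fun i hi => by linarith [hlam (Finset.mem_Icc.1 hi).2]) ht
    have hsub : ∑ i ∈ Finset.Icc i₁ k, h i 0 ^ 2 * exp (-4 * (lam i - lam i₀) * t) ≤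
        ∑ i ∈ Finset.Ioi i₀, h i 0 ^ 2 * exp (-4 * (lam i - lam i₀) * t) :=
      Finset.sum_le_sum_of_subset_of_nonneg
        (fun i hi => Finset.mem_Ioi.2 ((hlt_iff_le i).2 (Finset.mem_Icc.1 hi).1))
        (fun i _ _ => by positivity)
    refine one_div_mul_log_div_le (by linarith) ht
      (Finset.sum_nonneg fun i _ => sq_nonneg _) hB ?_
    rw [← neg_mul]
    exact hlow.trans (hsub.trans hSt)
  · have hSt := (abs_div_sqrt_le_iff hh0 (hS t) hε0).1 (hform t ht ▸ htε)
    have hup := sum_mul_exp_le_sum_mul_exp_of_le (Finset.Ioi i₀)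
      (μ := fun i => -4 * (lam i - lam i₀)) (m := -4 * (lam i₁ - lam i₀))
      (fun i _ => sq_nonneg (h i 0))
      (fun i hi => by linarith [hlam ((hlt_iff_le i).1 (Finset.mem_Ioi.1 hi))]) ht
    rw [hmass] at hup
    have harg : (z ^ 2)⁻¹ - 1 = (1 - z ^ 2) / z ^ 2 := by field_simp
    rw [harg, div_div]
    refine le_one_div_mul_log_div (by linarith) hB ?_
    rw [← neg_mul]
    exact hSt.trans hup
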